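/- Let (X, Y, Z) be random vectors in ℝ^d × ℝ^n × ℝ^m with a strictly positive joint Lebesgue density π_{X,Y,Z}, and define the conditional densities π_{Y|Z}(y|z), π_{X|Y,Z}(x|y,z), π_{Y|X,Z}(y|x,z), and π_{X|Z}(x|z) as the corresponding ratios of marginal densities; assume π_{X|Y,Z}(x|y,z) is continuously differentiable in y for each (x,z). Suppose for each fixed z the conditional measure with density π_{Y|Z}(·|z) satisfies the log-Sobolev inequality with constant κ ≥ 1 and symmetric positive definite matrix Γ_{Y|z} ∈ ℝ^{n×n}: for every continuously differentiable h: ℝ^n → ℝ with the relevant integrability, Ent_{π_{Y|Z=z}}[h²] ≤ 2κ ∫ ‖∇h(y)‖²_{Γ_{Y|z}} π_{Y|Z}(y|z) dy. Assume all integrals below are finite. Then the conditional mutual information satisfies I(X;Y|Z) ≤ (κ/2) ∫∫∫ ‖∇_y log π_{X|Y,Z}(x|y,z)‖²_{Γ_{Y|z}} π_{X,Y,Z}(x,y,z) dx dy dz. -/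

import Mathlib

open MeasureTheory Matrix

/-- The entropy functional `Ent_μ[f] = ∫ f log (f / ∫ f dμ) dμ`. -/
noncomputable def entFun {α : Type*} [MeasurableSpace α] (μ : Measure α) (f : α → ℝ) : ℝ :=
  ∫ x, f x * Real.log (f x / ∫ y, f y ∂μ) ∂μ

/-- The Γ-weighted squared norm `‖v‖²_Γ = vᵀ Γ v`. -/
noncomputable def quadForm {p : ℕ} (Γ : Matrix (Fin p) (Fin p) ℝ)
    (v : EuclideanSpace ℝ (Fin p)) : ℝ :=
  (v : Fin p → ℝ) ⬝ᵥ Γ.mulVec (v : Fin p → ℝ)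

/-!
Fix `x` and `z` and apply the log-Sobolev inequality of `π_{Y|Z}(·|z)` to
`h = √(π_{X|Y,Z}(x|·,z))`. Then `Ent[h²]` is `1 / π_Z(z)` times the `(x, z)`-fibre
`∫ π log (π_{X|Y,Z} / π_{X|Z}) dy` of the conditional mutual information (Bayes:
`π_{X|Y,Z} / π_{X|Z} = π_{Y|X,Z} / π_{Y|Z}`), while `∇h = (h / 2) ∇_y log π_{X|Y,Z}` makes the
Dirichlet energy `1 / (4 π_Z(z))` times the fibre of the right-hand side. Fubini integrates the
fibrewise inequalities over `(x, z)`.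
-/

lemma quadForm_smul {p : ℕ} (Γ : Matrix (Fin p) (Fin p) ℝ) (c : ℝ)
    (v : EuclideanSpace ℝ (Fin p)) : quadForm Γ (c • v) = c ^ 2 * quadForm Γ v := by
  simp only [quadForm, WithLp.ofLp_smul, Matrix.mulVec_smul, smul_dotProduct, dotProduct_smul,
    smul_eq_mul]
  ring

section Gradient

variable {E : Type*} [NormedAddCommGroup E] [InnerProductSpace ℝ E] [CompleteSpace E]
  {f : E → ℝ} {f' : E} {x : E}

theorem HasGradientAt.const_mul (c : ℝ) (hf : HasGradientAt f f' x) :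
    HasGradientAt (fun x => c * f x) (c • f') x := by
  rw [hasGradientAt_iff_hasFDerivAt, map_smul]
  exact hf.hasFDerivAt.const_mul c

theorem HasGradientAt.exp (hf : HasGradientAt f f' x) :
    HasGradientAt (fun x => Real.exp (f x)) (Real.exp (f x) • f') x := by
  rw [hasGradientAt_iff_hasFDerivAt, map_smul]
  exact hf.hasFDerivAt.exp

theorem contDiff_one_of_hasGradientAt {g : E → E} (hf : ∀ x, HasGradientAt f (g x) x)
    (hg : Continuous g) : ContDiff ℝ 1 f := by
  rw [contDiff_one_iff_fderiv]
  refine ⟨fun x => (hf x).differentiableAt, ?_⟩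
  rw [show fderiv ℝ f = fun x => InnerProductSpace.toDual ℝ E (g x) from
    funext fun x => (hf x).hasFDerivAt.fderiv]
  exact (InnerProductSpace.toDual ℝ E).continuous.comp hg

end Gradient

namespace MeasureTheory

theorem integral_pos_of_forall_pos {α : Type*} [MeasurableSpace α] {μ : Measure α} [NeZero μ]
    {f : α → ℝ} (hf : ∀ x, 0 < f x) (hfi : Integrable f μ) : 0 < ∫ x, f x ∂μ := by
  rw [integral_pos_iff_support_of_nonneg (fun x => (hf x).le) hfi,
    Function.support_eq_univ fun x => (hf x).ne']
  exact (NeZero.ne _).bot_lt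

section WithDensity

variable {α E : Type*} [MeasurableSpace α] {μ : Measure α} [NormedAddCommGroup E]
  [NormedSpace ℝ E] {w : α → ℝ}

theorem integral_withDensity_ofReal (hw : AEMeasurable w μ) (hw0 : 0 ≤ᵐ[μ] w) (f : α → E) :
    ∫ x, f x ∂μ.withDensity (fun x => ENNReal.ofReal (w x)) = ∫ x, w x • f x ∂μ := by
  rw [integral_withDensity_eq_integral_toReal_smul₀ hw.ennreal_ofReal
    (ae_of_all _ fun _ => ENNReal.ofReal_lt_top)]
  refine integral_congr_ae ?_
  filter_upwards [hw0] with x hx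
  rw [ENNReal.toReal_ofReal hx]

theorem integrable_withDensity_ofReal_iff (hw : AEMeasurable w μ) (hw0 : 0 ≤ᵐ[μ] w)
    {f : α → E} :
    Integrable f (μ.withDensity fun x => ENNReal.ofReal (w x)) ↔
      Integrable (fun x => w x • f x) μ := by
  rw [integrable_withDensity_iff_integrable_smul₀' hw.ennreal_ofReal
    (ae_of_all _ fun _ => ENNReal.ofReal_lt_top)]
  refine integrable_congr ?_
  filter_upwards [hw0] with x hx
  rw [ENNReal.toReal_ofReal hx]

end WithDensity

section Fubini

variable {α β γ : Type*} [MeasurableSpace α] [MeasurableSpace β] [MeasurableSpace γ]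
  {μ : Measure α} {ν : Measure β} {ξ : Measure γ} [SFinite μ] [SFinite ν] [SFinite ξ]

theorem Integrable.prod_prod_left_ae {E : Type*} [NormedAddCommGroup E] {f : α × β × γ → E}
    (hf : Integrable f (μ.prod (ν.prod ξ))) :
    ∀ᵐ z ∂ξ, Integrable (fun p : α × β => f (p.1, p.2, z)) (μ.prod ν) := by
  refine Integrable.prod_left_ae (f := fun r : (α × β) × γ => f (r.1.1, r.1.2, r.2)) ?_
  exact ((measurePreserving_prodAssoc μ ν ξ).integrable_comp_emb
    MeasurableEquiv.prodAssoc.measurableEmbedding).2 hf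

theorem Integrable.prod_prod_middle_ae {E : Type*} [NormedAddCommGroup E] {f : α × β × γ → E}
    (hf : Integrable f (μ.prod (ν.prod ξ))) :
    ∀ᵐ x ∂μ, ∀ᵐ z ∂ξ, Integrable (fun y => f (x, y, z)) ν := by
  filter_upwards [hf.prod_right_ae] with x hx
  exact hx.prod_left_ae

theorem integral_prod_prod_mono_ae {f g : α × β × γ → ℝ}
    (hf : Integrable f (μ.prod (ν.prod ξ))) (hg : Integrable g (μ.prod (ν.prod ξ)))
    (h : ∀ᵐ x ∂μ, ∀ᵐ z ∂ξ, ∫ y, f (x, y, z) ∂ν ≤ ∫ y, g (x, y, z) ∂ν) :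
    ∫ q, f q ∂μ.prod (ν.prod ξ) ≤ ∫ q, g q ∂μ.prod (ν.prod ξ) := by
  rw [integral_prod _ hf, integral_prod _ hg]
  refine integral_mono_ae hf.integral_prod_left hg.integral_prod_left ?_
  filter_upwards [hf.prod_right_ae, hg.prod_right_ae, h] with x hfx hgx hx
  rw [integral_prod_symm _ hfx, integral_prod_symm _ hgx]
  exact integral_mono_ae hfx.integral_prod_right hgx.integral_prod_right hx

end Fubini

end MeasureTheory

section LogSobolev

variable {n : ℕ}

def SatisfiesLogSobolev (μ : Measure (EuclideanSpace ℝ (Fin n))) (κ : ℝ)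
    (Γ : Matrix (Fin n) (Fin n) ℝ) : Prop :=
  ∀ h : EuclideanSpace ℝ (Fin n) → ℝ, ContDiff ℝ 1 h →
    Integrable (fun y => h y ^ 2 * Real.log (h y ^ 2)) μ →
    Integrable (fun y => h y ^ 2) μ →
    Integrable (fun y => quadForm Γ (gradient h y)) μ →
    entFun μ (fun y => h y ^ 2) ≤ 2 * κ * ∫ y, quadForm Γ (gradient h y) ∂μ

theorem SatisfiesLogSobolev.entFun_exp_le {μ : Measure (EuclideanSpace ℝ (Fin n))} {κ : ℝ}
    {Γ : Matrix (Fin n) (Fin n) ℝ} (hLSI : SatisfiesLogSobolev μ κ Γ)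
    {u : EuclideanSpace ℝ (Fin n) → ℝ} {G : EuclideanSpace ℝ (Fin n) → EuclideanSpace ℝ (Fin n)}
    (hu : ∀ y, HasGradientAt u (G y) y) (hG : Continuous G)
    (hint_log : Integrable (fun y => Real.exp (u y) * u y) μ)
    (hint : Integrable (fun y => Real.exp (u y)) μ)
    (hint_grad : Integrable (fun y => quadForm Γ (G y) * Real.exp (u y)) μ) :
    entFun μ (fun y => Real.exp (u y)) ≤
      κ / 2 * ∫ y, quadForm Γ (G y) * Real.exp (u y) ∂μ := by
  set h := fun y => Real.exp (2⁻¹ * u y)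
  have hsq : ∀ y, h y ^ 2 = Real.exp (u y) := fun y => by
    rw [← Real.exp_nat_mul]; congr 1; push_cast; ring
  have hgrad : ∀ y, quadForm Γ (gradient h y) = quadForm Γ (G y) * Real.exp (u y) / 4 :=
    fun y => by
      rw [((hu y).const_mul 2⁻¹).exp.gradient, smul_smul, quadForm_smul, mul_pow, ← hsq]
      ring
  have hh : ContDiff ℝ 1 h :=
    Real.contDiff_exp.comp (contDiff_const.mul (contDiff_one_of_hasGradientAt hu hG))
  have key := hLSI h hh (by simpa only [hsq, Real.log_exp] using hint_log)
    (by simpa only [hsq] using hint) (by simpa only [hgrad] using hint_grad.div_const 4)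
  simp only [hsq, hgrad, integral_div] at key
  linarith

theorem integral_mul_log_div_le_of_satisfiesLogSobolev {κ : ℝ}
    {Γ : Matrix (Fin n) (Fin n) ℝ} {p ρ : EuclideanSpace ℝ (Fin n) → ℝ}
    {G : EuclideanSpace ℝ (Fin n) → EuclideanSpace ℝ (Fin n)} {a c : ℝ}
    (hLSI : SatisfiesLogSobolev (volume.withDensity fun y => ENNReal.ofReal (ρ y / c)) κ Γ)
    (hp : ∀ y, 0 < p y) (hp_int : Integrable p) (hpa : ∫ y, p y = a)
    (hρ : AEMeasurable ρ) (hρ_pos : ∀ᵐ y, 0 < ρ y) (hc : 0 < c)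
    (hG : ∀ y, HasGradientAt (fun y' => Real.log (p y' / ρ y')) (G y) y) (hG_cont : Continuous G)
    (hint_log : Integrable fun y => p y * Real.log ((p y / a) / (ρ y / c)))
    (hint_grad : Integrable fun y => quadForm Γ (G y) * p y) :
    ∫ y, p y * Real.log ((p y / a) / (ρ y / c)) ≤ κ / 2 * ∫ y, quadForm Γ (G y) * p y := by
  set u := fun y => Real.log (p y / ρ y)
  have ha : 0 < a := hpa ▸ integral_pos_of_forall_pos hp hp_int
  have hw : AEMeasurable fun y => ρ y / c := hρ.div_const c
  have hw0 : 0 ≤ᵐ[volume] fun y => ρ y / c := by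
    filter_upwards [hρ_pos] with y hy
    exact div_nonneg hy.le hc.le
  have hexp : ∀ᵐ y, Real.exp (u y) = p y / ρ y := by
    filter_upwards [hρ_pos] with y hy
    exact Real.exp_log (div_pos (hp y) hy)
  have hlog : ∀ᵐ y, ρ y / c * (Real.exp (u y) * u y) =
      (p y * Real.log ((p y / a) / (ρ y / c)) + p y * Real.log (a / c)) / c := by
    filter_upwards [hρ_pos, hexp] with y hy hy'
    rw [hy', div_div_div_comm, Real.log_div (div_pos (hp y) hy).ne' (div_pos ha hc).ne']
    field_simp
    ring
  have hmass : ∀ᵐ y, ρ y / c * Real.exp (u y) = p y / c := by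
    filter_upwards [hρ_pos, hexp] with y hy hy'
    rw [hy']
    field_simp
  have hquad : ∀ᵐ y, ρ y / c * (quadForm Γ (G y) * Real.exp (u y)) =
      quadForm Γ (G y) * p y / c := by
    filter_upwards [hρ_pos, hexp] with y hy hy'
    rw [hy']
    field_simp
  have hent : entFun (volume.withDensity fun y => ENNReal.ofReal (ρ y / c))
      (fun y => Real.exp (u y)) = (∫ y, p y * Real.log ((p y / a) / (ρ y / c))) / c := by
    rw [entFun, integral_withDensity_ofReal hw hw0, integral_withDensity_ofReal hw hw0]
    simp only [smul_eq_mul]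
    rw [integral_congr_ae hmass, integral_div, hpa, ← integral_div]
    refine integral_congr_ae ?_
    filter_upwards [hρ_pos, hexp] with y hy hy'
    rw [hy', div_div_div_comm]
    field_simp
  have key := hLSI.entFun_exp_le hG hG_cont
    ((integrable_withDensity_ofReal_iff hw hw0).2
      (((hint_log.add (hp_int.mul_const _)).div_const c).congr (hlog.mono fun _ h => h.symm)))
    ((integrable_withDensity_ofReal_iff hw hw0).2
      ((hp_int.div_const c).congr (hmass.mono fun _ h => h.symm)))
    ((integrable_withDensity_ofReal_iff hw hw0).2
      ((hint_grad.div_const c).congr (hquad.mono fun _ h => h.symm)))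
  rw [hent, integral_withDensity_ofReal hw hw0] at key
  simp only [smul_eq_mul] at key
  rw [integral_congr_ae hquad, integral_div,
    mul_div_assoc', div_le_div_iff_of_pos_right hc] at key
  exact key

end LogSobolev

theorem cond_mutual_information_le_of_log_sobolev_general
    {d n m : ℕ}
    (π : EuclideanSpace ℝ (Fin d) → EuclideanSpace ℝ (Fin n) → EuclideanSpace ℝ (Fin m) → ℝ)
    (hπpos : ∀ x y z, 0 < π x y z)
    (hπprob : (∫ q : EuclideanSpace ℝ (Fin d) × EuclideanSpace ℝ (Fin n) ×
        EuclideanSpace ℝ (Fin m), π q.1 q.2.1 q.2.2) = 1)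
    -- marginal densities
    (πYZ : EuclideanSpace ℝ (Fin n) → EuclideanSpace ℝ (Fin m) → ℝ)
    (hπYZ : ∀ y z, πYZ y z = ∫ x, π x y z)
    (πXZ : EuclideanSpace ℝ (Fin d) → EuclideanSpace ℝ (Fin m) → ℝ)
    (hπXZ : ∀ x z, πXZ x z = ∫ y, π x y z)
    (πZ : EuclideanSpace ℝ (Fin m) → ℝ)
    (hπZ : ∀ z, πZ z = ∫ q : EuclideanSpace ℝ (Fin d) × EuclideanSpace ℝ (Fin n), π q.1 q.2 z)
    -- `g x y z` is the gradient in `y` of `log π_{X|Y,Z}(x|y,z)`, assumed to exist and be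
    -- continuous in `y` for each fixed `(x, z)`
    (g : EuclideanSpace ℝ (Fin d) → EuclideanSpace ℝ (Fin n) → EuclideanSpace ℝ (Fin m) →
      EuclideanSpace ℝ (Fin n))
    (hg : ∀ x y z, HasGradientAt (fun y' => Real.log (π x y' z / πYZ y' z)) (g x y z) y)
    (hgcont : ∀ x z, Continuous (fun y => g x y z))
    (κ : ℝ)
    (Γ : EuclideanSpace ℝ (Fin m) → Matrix (Fin n) (Fin n) ℝ)
    -- log-Sobolev inequality for each conditional `π_{Y|Z}(·|z)`
    (hLSI : ∀ z, ∀ h : EuclideanSpace ℝ (Fin n) → ℝ, ContDiff ℝ 1 h →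
      Integrable (fun y => h y ^ 2 * Real.log (h y ^ 2))
        (volume.withDensity fun y => ENNReal.ofReal (πYZ y z / πZ z)) →
      Integrable (fun y => h y ^ 2)
        (volume.withDensity fun y => ENNReal.ofReal (πYZ y z / πZ z)) →
      Integrable (fun y => quadForm (Γ z) (gradient h y))
        (volume.withDensity fun y => ENNReal.ofReal (πYZ y z / πZ z)) →
      entFun (volume.withDensity fun y => ENNReal.ofReal (πYZ y z / πZ z)) (fun y => h y ^ 2) ≤
        2 * κ * ∫ y, quadForm (Γ z) (gradient h y)
          ∂(volume.withDensity fun y => ENNReal.ofReal (πYZ y z / πZ z)))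
    (hCMIint : Integrable (fun q : EuclideanSpace ℝ (Fin d) × EuclideanSpace ℝ (Fin n) ×
        EuclideanSpace ℝ (Fin m) =>
      π q.1 q.2.1 q.2.2 *
        Real.log ((π q.1 q.2.1 q.2.2 / πXZ q.1 q.2.2) / (πYZ q.2.1 q.2.2 / πZ q.2.2))))
    (hRHSint : Integrable (fun q : EuclideanSpace ℝ (Fin d) × EuclideanSpace ℝ (Fin n) ×
        EuclideanSpace ℝ (Fin m) =>
      quadForm (Γ q.2.2) (g q.1 q.2.1 q.2.2) * π q.1 q.2.1 q.2.2)) :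
    (∫ q : EuclideanSpace ℝ (Fin d) × EuclideanSpace ℝ (Fin n) × EuclideanSpace ℝ (Fin m),
        π q.1 q.2.1 q.2.2 *
          Real.log ((π q.1 q.2.1 q.2.2 / πXZ q.1 q.2.2) / (πYZ q.2.1 q.2.2 / πZ q.2.2))) ≤
      κ / 2 * ∫ q : EuclideanSpace ℝ (Fin d) × EuclideanSpace ℝ (Fin n) ×
          EuclideanSpace ℝ (Fin m),
        quadForm (Γ q.2.2) (g q.1 q.2.1 q.2.2) * π q.1 q.2.1 q.2.2 := by
  have hπ_int : Integrable fun q : EuclideanSpace ℝ (Fin d) × EuclideanSpace ℝ (Fin n) ×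
      EuclideanSpace ℝ (Fin m) => π q.1 q.2.1 q.2.2 :=
    Integrable.of_integral_ne_zero (hπprob ▸ one_ne_zero)
  have hZ : ∀ᵐ z, 0 < πZ z ∧ AEMeasurable (fun y => πYZ y z) ∧ ∀ᵐ y, 0 < πYZ y z := by
    filter_upwards [hπ_int.prod_prod_left_ae] with z hz
    simp only [hπZ, hπYZ]
    refine ⟨integral_pos_of_forall_pos (fun _ => hπpos _ _ _) hz,
      hz.integral_prod_right.aemeasurable, ?_⟩
    filter_upwards [hz.prod_left_ae] with y hy
    exact integral_pos_of_forall_pos (fun _ => hπpos _ _ _) hy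
  rw [← integral_const_mul]
  refine integral_prod_prod_mono_ae hCMIint (hRHSint.const_mul _) ?_
  filter_upwards [hCMIint.prod_prod_middle_ae, hRHSint.prod_prod_middle_ae,
    hπ_int.prod_prod_middle_ae] with x hlog hgrad hp
  filter_upwards [hlog, hgrad, hp, hZ] with z hlog_z hgrad_z hp_z ⟨hc, hρ, hρ_pos⟩
  rw [integral_const_mul]
  exact integral_mul_log_div_le_of_satisfiesLogSobolev (hLSI z) (fun y => hπpos x y z) hp_z
    (hπXZ x z).symm hρ hρ_pos hc (fun y => hg x y z) (hgcont x z) hlog_z hgrad_z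

/-- If for each `z` the conditional density `π_{Y|Z}(·|z)` satisfies a log-Sobolev inequality
with constant `κ` and matrix `Γ_{Y|z}`, then the conditional mutual information satisfies
`I(X;Y|Z) ≤ (κ/2) ∫∫∫ ‖∇_y log π_{X|Y,Z}(x|y,z)‖²_{Γ_{Y|z}} π_{X,Y,Z}(x,y,z) dx dy dz`. -/
theorem cond_mutual_information_le_of_log_sobolev
    {d n m : ℕ}
    (π : EuclideanSpace ℝ (Fin d) → EuclideanSpace ℝ (Fin n) → EuclideanSpace ℝ (Fin m) → ℝ)
    (hπmeas : Measurable
      (fun q : EuclideanSpace ℝ (Fin d) × EuclideanSpace ℝ (Fin n) × EuclideanSpace ℝ (Fin m) =>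
        π q.1 q.2.1 q.2.2))
    (hπpos : ∀ x y z, 0 < π x y z)
    (hπprob : (∫ q : EuclideanSpace ℝ (Fin d) × EuclideanSpace ℝ (Fin n) ×
        EuclideanSpace ℝ (Fin m), π q.1 q.2.1 q.2.2) = 1)
    -- marginal densities
    (πYZ : EuclideanSpace ℝ (Fin n) → EuclideanSpace ℝ (Fin m) → ℝ)
    (hπYZ : ∀ y z, πYZ y z = ∫ x, π x y z)
    (πXZ : EuclideanSpace ℝ (Fin d) → EuclideanSpace ℝ (Fin m) → ℝ)
    (hπXZ : ∀ x z, πXZ x z = ∫ y, π x y z)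
    (πZ : EuclideanSpace ℝ (Fin m) → ℝ)
    (hπZ : ∀ z, πZ z = ∫ q : EuclideanSpace ℝ (Fin d) × EuclideanSpace ℝ (Fin n), π q.1 q.2 z)
    -- `g x y z` is the gradient in `y` of `log π_{X|Y,Z}(x|y,z)`, assumed to exist and be
    -- continuous in `y` for each fixed `(x, z)`
    (g : EuclideanSpace ℝ (Fin d) → EuclideanSpace ℝ (Fin n) → EuclideanSpace ℝ (Fin m) →
      EuclideanSpace ℝ (Fin n))
    (hg : ∀ x y z, HasGradientAt (fun y' => Real.log (π x y' z / πYZ y' z)) (g x y z) y)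
    (hgcont : ∀ x z, Continuous (fun y => g x y z))
    (κ : ℝ) (hκ : 1 ≤ κ)
    (Γ : EuclideanSpace ℝ (Fin m) → Matrix (Fin n) (Fin n) ℝ) (hΓ : ∀ z, (Γ z).PosDef)
    -- log-Sobolev inequality for each conditional `π_{Y|Z}(·|z)`
    (hLSI : ∀ z, ∀ h : EuclideanSpace ℝ (Fin n) → ℝ, ContDiff ℝ 1 h →
      Integrable (fun y => h y ^ 2 * Real.log (h y ^ 2))
        (volume.withDensity fun y => ENNReal.ofReal (πYZ y z / πZ z)) →
      Integrable (fun y => h y ^ 2)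
        (volume.withDensity fun y => ENNReal.ofReal (πYZ y z / πZ z)) →
      Integrable (fun y => quadForm (Γ z) (gradient h y))
        (volume.withDensity fun y => ENNReal.ofReal (πYZ y z / πZ z)) →
      entFun (volume.withDensity fun y => ENNReal.ofReal (πYZ y z / πZ z)) (fun y => h y ^ 2) ≤
        2 * κ * ∫ y, quadForm (Γ z) (gradient h y)
          ∂(volume.withDensity fun y => ENNReal.ofReal (πYZ y z / πZ z)))
    (hCMIint : Integrable (fun q : EuclideanSpace ℝ (Fin d) × EuclideanSpace ℝ (Fin n) ×
        EuclideanSpace ℝ (Fin m) =>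
      π q.1 q.2.1 q.2.2 *
        Real.log ((π q.1 q.2.1 q.2.2 / πXZ q.1 q.2.2) / (πYZ q.2.1 q.2.2 / πZ q.2.2))))
    (hRHSint : Integrable (fun q : EuclideanSpace ℝ (Fin d) × EuclideanSpace ℝ (Fin n) ×
        EuclideanSpace ℝ (Fin m) =>
      quadForm (Γ q.2.2) (g q.1 q.2.1 q.2.2) * π q.1 q.2.1 q.2.2)) :
    (∫ q : EuclideanSpace ℝ (Fin d) × EuclideanSpace ℝ (Fin n) × EuclideanSpace ℝ (Fin m),
        π q.1 q.2.1 q.2.2 *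
          Real.log ((π q.1 q.2.1 q.2.2 / πXZ q.1 q.2.2) / (πYZ q.2.1 q.2.2 / πZ q.2.2))) ≤
      κ / 2 * ∫ q : EuclideanSpace ℝ (Fin d) × EuclideanSpace ℝ (Fin n) ×
          EuclideanSpace ℝ (Fin m),
        quadForm (Γ q.2.2) (g q.1 q.2.1 q.2.2) * π q.1 q.2.1 q.2.2 :=
  cond_mutual_information_le_of_log_sobolev_general π hπpos hπprob πYZ hπYZ πXZ hπXZ πZ hπZ g hg
    hgcont κ Γ hLSI hCMIint hRHSint
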